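/- Suppose α = α_s := 1/(4|v_min|(1+v_min)). Then for every k ≥ 2, X(v*,k) = 2^{-k}·X_0·((1 − v_max + 2v_min)·k + 1 + v_max)/(1 + v_min). -/

import Mathlib

/-- Account value `X(v,k)` for feedback gain `α`, initial value `X0`, path `v`. -/
noncomputable def accountX (α X0 : ℝ) (v : ℕ → ℝ) : ℕ → ℝ
  | 0 => X0
  | 1 => X0
  | (k + 2) => accountX α X0 v (k + 1) + α * (1 + v k) * v (k + 1) * accountX α X0 v k

/-- The distinguished path: `v*(0) = v_max` and `v*(k) = v_min` for `k ≥ 1`. -/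
noncomputable def vstar (vmin vmax : ℝ) : ℕ → ℝ := fun k => if k = 0 then vmax else vmin

/-! A sequence satisfying `x (n + 2) = 2 r x (n + 1) - r² x n` has the double characteristic root
`r`, hence is of the form `(a + b n) rⁿ`. For `α = α_s` the gain `α (1 + v_min) v_min` equals `-1/4`,
so along `v*` the account values `X(v*, n + 1)` obey this recurrence with `r = 1/2`; the constants
`a, b` are read off `X(v*, 1)` and `X(v*, 2)`. -/

theorem eq_of_double_root_recurrence {R : Type*} [CommRing R] {x : ℕ → R} {r a b : R}
    (hx : ∀ n, x (n + 2) = 2 * r * x (n + 1) - r ^ 2 * x n)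
    (h0 : x 0 = a) (h1 : x 1 = (a + b) * r) (n : ℕ) :
    x n = (a + b * n) * r ^ n := by
  induction n using Nat.twoStepInduction with
  | zero => simp [h0]
  | one => simp [h1]
  | more n ih ih' =>
    rw [hx, ih, ih']
    push_cast
    ring

theorem accountX_two (α X0 : ℝ) (v : ℕ → ℝ) :
    accountX α X0 v 2 = X0 + α * (1 + v 0) * v 1 * X0 := rfl

theorem accountX_vstar_add_three (α X0 vmin vmax : ℝ) (n : ℕ) :
    accountX α X0 (vstar vmin vmax) (n + 3) =
      accountX α X0 (vstar vmin vmax) (n + 2) +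
        α * (1 + vmin) * vmin * accountX α X0 (vstar vmin vmax) (n + 1) := by
  simp only [accountX.eq_3 α X0 _ (n + 1), vstar, Nat.add_one_ne_zero, if_false]

theorem singular_gain_mul {vmin : ℝ} (h1 : -1 < vmin) (h2 : vmin < 0) :
    1 / (4 * |vmin| * (1 + vmin)) * (1 + vmin) * vmin = -1 / 4 := by
  rw [abs_of_neg h2]
  field_simp [show 1 + vmin ≠ 0 by linarith, h2.ne]

theorem closed_form_singular_general (vmin vmax α X0 : ℝ)
    (h1 : -1 < vmin) (h2 : vmin < 0)
    (hα : α = 1 / (4 * |vmin| * (1 + vmin))) :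
    ∀ k ≥ 2,
      accountX α X0 (vstar vmin vmax) k =
        (2 : ℝ) ^ (-(k : ℤ)) * X0 * ((1 - vmax + 2 * vmin) * k + 1 + vmax) / (1 + vmin) := by
  have hne : 1 + vmin ≠ 0 := by linarith
  have hgain : α * (1 + vmin) * vmin = -1 / 4 := hα ▸ singular_gain_mul h1 h2
  set X := accountX α X0 (vstar vmin vmax)
  have hrec (n : ℕ) : X (n + 3) = 2 * (1 / 2) * X (n + 2) - (1 / 2) ^ 2 * X (n + 1) := by
    simp only [X, accountX_vstar_add_three, hgain]
    ring
  have hX2 : X 2 = (X0 + X0 * (1 - vmax + 2 * vmin) / (2 * (1 + vmin))) * (1 / 2) := by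
    simp only [X, accountX_two, vstar, if_true, Nat.one_ne_zero, if_false]
    field_simp
    linear_combination 4 * (1 + vmax) * X0 * hgain
  intro k hk
  obtain ⟨n, rfl⟩ : ∃ n, k = n + 1 := ⟨k - 1, by omega⟩
  rw [eq_of_double_root_recurrence (x := fun n ↦ X (n + 1)) (a := X0) hrec rfl hX2 n,
    zpow_neg, zpow_natCast, one_div_pow]
  field_simp
  push_cast
  ring

/-- Closed form for `X(v*,k)` in the singular case `α = α_s = 1/(4|v_min|(1+v_min))`:
for `k ≥ 2`, `X(v*,k) = 2^{-k} X0 ((1 − v_max + 2 v_min) k + 1 + v_max)/(1 + v_min)`. -/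
theorem closed_form_singular (vmin vmax α X0 : ℝ)
    (h1 : -1 < vmin) (h2 : vmin < 0) (h3 : 0 < vmax) (hX0 : 0 < X0)
    (hα : α = 1 / (4 * |vmin| * (1 + vmin))) :
    ∀ k ≥ 2,
      accountX α X0 (vstar vmin vmax) k =
        (2 : ℝ) ^ (-(k : ℤ)) * X0 * ((1 - vmax + 2 * vmin) * k + 1 + vmax) / (1 + vmin) :=
  closed_form_singular_general vmin vmax α X0 h1 h2 hα
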